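/- Let B > 0 and let f₀ = (1/(2B)) 𝟙_{(−B,B)} be the uniform density on (−B,B). Define G̃(a,y) = 4B² [ 2 f₀(a − y/2) f₀(a + y/2) − f₀(a) f₀(a+y) − f₀(a) f₀(a−y) ]. Then: (i) for every a ∈ (0, B/2] and every y ∈ (0,B) with y ≠ B−a, one has G̃(a,y) = 𝟙_{(B−a, B)}(y); and (ii) for every a ∈ (B/2, B) and every y ∈ (0,B) with y ∉ {B−a, 2(B−a)}, one has G̃(a,y) = 𝟙_{(B−a, 2(B−a))}(y) − 𝟙_{(2(B−a), B)}(y). -/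
import Mathlib


open MeasureTheory Set

/-- The uniform density on `(-B, B)`. -/
noncomputable def uniformDensity (B x : ℝ) : ℝ :=
  (1 / (2 * B)) * (Set.Ioo (-B) B).indicator 1 x

/-- The kernel `G̃(a,y) = 4B²[2f₀(a−y/2)f₀(a+y/2) − f₀(a)f₀(a+y) − f₀(a)f₀(a−y)]`
for the uniform density `f₀` on `(-B,B)`. -/
noncomputable def Gtilde (B a y : ℝ) : ℝ :=
  4 * B ^ 2 * (2 * uniformDensity B (a - y / 2) * uniformDensity B (a + y / 2)
    - uniformDensity B a * uniformDensity B (a + y)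
    - uniformDensity B a * uniformDensity B (a - y))

lemma ud_one (B x : ℝ) (h1 : -B < x) (h2 : x < B) :
    uniformDensity B x = 1 / (2 * B) := by
  simp [uniformDensity, Set.indicator_of_mem (Set.mem_Ioo.2 ⟨h1, h2⟩)]

lemma ud_zero (B x : ℝ) (h : B ≤ x) : uniformDensity B x = 0 := by
  have : x ∉ Set.Ioo (-B) B := by simp [Set.mem_Ioo]; intro; linarith
  simp [uniformDensity, Set.indicator_of_notMem this]

theorem stmt5 (B : ℝ) (hB : 0 < B) :
    (∀ a ∈ Set.Ioc (0:ℝ) (B / 2), ∀ y ∈ Set.Ioo (0:ℝ) B, y ≠ B - a →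
        Gtilde B a y = (Set.Ioo (B - a) B).indicator 1 y) ∧
    (∀ a ∈ Set.Ioo (B / 2) B, ∀ y ∈ Set.Ioo (0:ℝ) B, y ≠ B - a → y ≠ 2 * (B - a) →
        Gtilde B a y = (Set.Ioo (B - a) (2 * (B - a))).indicator 1 y
          - (Set.Ioo (2 * (B - a)) B).indicator 1 y) := by
  have hBne : (2 * B) ≠ 0 := by positivity
  constructor
  · rintro a ⟨ha0, ha2⟩ y ⟨hy0, hyB⟩ hne
    have h1 := ud_one B (a - y / 2) (by linarith) (by linarith)
    have h2 := ud_one B (a + y / 2) (by linarith) (by linarith)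
    have h3 := ud_one B a (by linarith) (by linarith)
    have h5 := ud_one B (a - y) (by linarith) (by linarith)
    rcases hne.lt_or_gt with h | h
    · have h4 := ud_one B (a + y) (by linarith) (by linarith)
      have hR : y ∉ Set.Ioo (B - a) B := by simp [Set.mem_Ioo]; intro; linarith
      rw [Set.indicator_of_notMem hR]
      simp only [Gtilde, h1, h2, h3, h4, h5]
      field_simp
      ring
    · have h4 := ud_zero B (a + y) (by linarith)
      have hR : y ∈ Set.Ioo (B - a) B := ⟨h, hyB⟩
      rw [Set.indicator_of_mem hR]
      simp only [Gtilde, h1, h2, h3, h4, h5, Pi.one_apply]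
      field_simp
      ring
  · rintro a ⟨ha0, ha1⟩ y ⟨hy0, hyB⟩ hne1 hne2
    have h1 := ud_one B (a - y / 2) (by linarith) (by linarith)
    have h3 := ud_one B a (by linarith) (by linarith)
    have h5 := ud_one B (a - y) (by linarith) (by linarith)
    rcases hne2.lt_or_gt with h2c | h2c
    · have h2 := ud_one B (a + y / 2) (by linarith) (by linarith)
      rcases hne1.lt_or_gt with h | h
      · have h4 := ud_one B (a + y) (by linarith) (by linarith)
        rw [Set.indicator_of_notMem (by simp [Set.mem_Ioo]; intro; linarith : y ∉ Set.Ioo (B - a) (2 * (B - a))),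
            Set.indicator_of_notMem (by simp [Set.mem_Ioo]; intro; linarith : y ∉ Set.Ioo (2 * (B - a)) B)]
        simp only [Gtilde, h1, h2, h3, h4, h5]
        field_simp
        ring
      · have h4 := ud_zero B (a + y) (by linarith)
        rw [Set.indicator_of_mem (Set.mem_Ioo.2 ⟨h, h2c⟩ : y ∈ Set.Ioo (B - a) (2 * (B - a))),
            Set.indicator_of_notMem (by simp [Set.mem_Ioo]; intro; linarith : y ∉ Set.Ioo (2 * (B - a)) B)]
        simp only [Gtilde, h1, h3, h4, h5, h2, Pi.one_apply]
        field_simp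
        ring
    · have h2 := ud_zero B (a + y / 2) (by linarith)
      have h4 := ud_zero B (a + y) (by linarith)
      rw [Set.indicator_of_notMem (by simp [Set.mem_Ioo]; intro; linarith : y ∉ Set.Ioo (B - a) (2 * (B - a))),
          Set.indicator_of_mem (Set.mem_Ioo.2 ⟨h2c, hyB⟩ : y ∈ Set.Ioo (2 * (B - a)) B)]
      simp only [Gtilde, h1, h2, h3, h4, h5, Pi.one_apply]
      field_simp
      ring
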